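/- arXiv:2508.14356 — 3 statements merged into one kernel-verified Lean document; each statement's English description precedes it below -/
import Mathlib

section
/- In a simple graph G, if a subgraph H is a k-truss (every edge of H is contained in at least k-2 triangles whose edges all lie in H) and H contains at least one edge, then H has at least k(k-1)/2 edges. -/
variable {V : Type*} [Fintype V] [DecidableEq V]

/-- A triangle of `H` : a 3-set of pairwise adjacent vertices. -/
def IsTriangle (H : SimpleGraph V) (t : Finset V) : Prop :=
  t.card = 3 ∧ ∀ a ∈ t, ∀ b ∈ t, a ≠ b → H.Adj a b

instance (H : SimpleGraph V) [DecidableRel H.Adj] (t : Finset V) :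
    Decidable (IsTriangle H t) := by unfold IsTriangle; infer_instance

/-- The number of triangles of `H` containing both endpoints of an edge `{u,v}`. -/
def edgeSupport (H : SimpleGraph V) [DecidableRel H.Adj] (u v : V) : ℕ :=
  (Finset.univ.filter (fun t : Finset V => IsTriangle H t ∧ u ∈ t ∧ v ∈ t)).card

lemma truss_deg_bound (H : SimpleGraph V) [DecidableRel H.Adj] (k : ℕ)
    (htruss : ∀ u v : V, H.Adj u v → k - 2 ≤ edgeSupport H u v)
    {u v : V} (huv : H.Adj u v) : k - 1 ≤ H.degree u := by
  classical
  set N : Finset V :=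
    Finset.univ.filter (fun w => w ≠ u ∧ w ≠ v ∧ H.Adj u w ∧ H.Adj v w) with hN
  have hne' : u ≠ v := huv.ne
  have hcard : k - 2 ≤ N.card := by
    refine le_trans (htruss u v huv) ?_
    rw [edgeSupport]
    have := Finset.card_le_card_of_injOn (f := fun t : Finset V => (t.erase u).erase v)
      (s := Finset.univ.filter (fun t : Finset V => IsTriangle H t ∧ u ∈ t ∧ v ∈ t))
      (t := N.image (fun w => ({w} : Finset V))) ?_ ?_
    · calc _ ≤ (N.image (fun w => ({w} : Finset V))).card := this
        _ = N.card := Finset.card_image_of_injective _ Finset.singleton_injective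
    · intro t ht
      rw [Finset.mem_coe, Finset.mem_filter] at ht
      obtain ⟨-, ⟨hc3, hadj⟩, hu, hv⟩ := ht
      have hv' : v ∈ t.erase u := Finset.mem_erase.mpr ⟨fun h => hne' h.symm, hv⟩
      have h1 : ((t.erase u).erase v).card = 1 := by
        rw [Finset.card_erase_of_mem hv', Finset.card_erase_of_mem hu, hc3]
      obtain ⟨w, hw⟩ := Finset.card_eq_one.mp h1
      have hwm : w ∈ (t.erase u).erase v := hw ▸ Finset.mem_singleton_self w
      rw [Finset.mem_erase, Finset.mem_erase] at hwm
      obtain ⟨hwv, hwu, hwt⟩ := hwm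
      refine Finset.mem_image.mpr ⟨w, ?_, hw.symm⟩
      exact Finset.mem_filter.mpr ⟨Finset.mem_univ _,
        hwu, hwv, hadj u hu w hwt (fun h => hwu h.symm),
        hadj v hv w hwt (fun h => hwv h.symm)⟩
    · intro t1 h1 t2 h2 heq
      rw [Finset.mem_coe, Finset.mem_filter] at h1 h2
      obtain ⟨-, -, hu1, hv1⟩ := h1
      obtain ⟨-, -, hu2, hv2⟩ := h2
      have key : ∀ t : Finset V, u ∈ t → v ∈ t →
          t = insert u (insert v ((t.erase u).erase v)) := by
        intro t hu hv
        rw [Finset.insert_erase (Finset.mem_erase.mpr ⟨fun h => hne' h.symm, hv⟩),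
          Finset.insert_erase hu]
      rw [key t1 hu1 hv1, key t2 hu2 hv2]
      exact congrArg (insert u) (congrArg (insert v) heq)
  have hsub : insert v N ⊆ H.neighborFinset u := by
    intro w hw
    rw [Finset.mem_insert] at hw
    rcases hw with rfl | hw
    · exact SimpleGraph.mem_neighborFinset _ _ _ |>.mpr huv
    · rw [hN, Finset.mem_filter] at hw
      exact SimpleGraph.mem_neighborFinset _ _ _ |>.mpr hw.2.2.2.1
  have hvN : v ∉ N := by
    rw [hN, Finset.mem_filter]; rintro ⟨-, -, h, -⟩; exact h rfl
  have := Finset.card_le_card hsub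
  rw [Finset.card_insert_of_notMem hvN] at this
  rw [SimpleGraph.degree]
  omega

/-- A `k`-truss subgraph `H` (with `k ≥ 2`) having at least one edge has at
least `k(k-1)/2` edges. -/
theorem stmt0 (G H : SimpleGraph V) [DecidableRel H.Adj] (hle : H ≤ G)
    (k : ℕ) (hk : 2 ≤ k)
    (htruss : ∀ u v : V, H.Adj u v → k - 2 ≤ edgeSupport H u v)
    (hne : H.edgeFinset.Nonempty) :
    k * (k - 1) / 2 ≤ H.edgeFinset.card := by
  classical
  obtain ⟨u, v, huv⟩ : ∃ u v, H.Adj u v := by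
    obtain ⟨e, he⟩ := hne
    rw [SimpleGraph.mem_edgeFinset] at he
    revert he
    refine e.ind ?_
    intro u v he
    exact ⟨u, v, he⟩
  set S : Finset V := Finset.univ.filter (fun w => 0 < H.degree w) with hS
  have hSsub : insert u (H.neighborFinset u) ⊆ S := by
    intro w hw
    rw [Finset.mem_insert] at hw
    rw [hS, Finset.mem_filter]
    refine ⟨Finset.mem_univ _, ?_⟩
    rcases hw with rfl | hw
    · exact Finset.card_pos.mpr ⟨v, (SimpleGraph.mem_neighborFinset _ _ _).mpr huv⟩
    · rw [SimpleGraph.mem_neighborFinset] at hw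
      exact Finset.card_pos.mpr ⟨u, (SimpleGraph.mem_neighborFinset _ _ _).mpr hw.symm⟩
  have hScard : k ≤ S.card := by
    have h1 := Finset.card_le_card hSsub
    rw [Finset.card_insert_of_notMem (by
      rw [SimpleGraph.mem_neighborFinset]; exact H.irrefl)] at h1
    have h2 : k - 1 ≤ H.degree u := truss_deg_bound H k htruss huv
    simp only [SimpleGraph.degree] at h2
    omega
  have hdeg : ∀ w ∈ S, k - 1 ≤ H.degree w := by
    intro w hw
    rw [hS, Finset.mem_filter] at hw
    obtain ⟨x, hx⟩ := Finset.card_pos.mp hw.2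
    rw [SimpleGraph.mem_neighborFinset] at hx
    exact truss_deg_bound H k htruss hx
  have hsum : k * (k - 1) ≤ ∑ w ∈ S, H.degree w := by
    calc k * (k - 1) ≤ S.card * (k - 1) := Nat.mul_le_mul_right _ hScard
      _ = ∑ _w ∈ S, (k - 1) := by rw [Finset.sum_const, smul_eq_mul]
      _ ≤ ∑ w ∈ S, H.degree w := Finset.sum_le_sum hdeg
  have htot : ∑ w ∈ S, H.degree w ≤ 2 * H.edgeFinset.card := by
    rw [← SimpleGraph.sum_degrees_eq_twice_card_edges]
    exact Finset.sum_le_sum_of_subset (Finset.subset_univ S)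
  have : k * (k - 1) ≤ 2 * H.edgeFinset.card := le_trans hsum htot
  omega
end

section
/- Let H be a simple graph on exactly s vertices with no isolated vertices. If H is an s-truss (every edge lies in at least s-2 triangles of H), then H is a complete graph on s vertices, i.e., an s-clique. -/
/-!
Every triangle through an edge `uv` is `{u, v, x}` for a common neighbour `x` of `u` and `v`,
so an edge of an `s`-truss on `s` vertices has at least `s - 2` common neighbours, i.e. every
other vertex. Hence an endpoint of an edge is adjacent to all other vertices, and since no
vertex is isolated, every vertex is such an endpoint.
-/

variable {V : Type*} [Fintype V] [DecidableEq V]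

omit [Fintype V] in
lemma IsTriangle.exists_eq_insert_insert {H : SimpleGraph V} {u v : V} {t : Finset V}
    (ht : IsTriangle H t) (hu : u ∈ t) (hv : v ∈ t) (huv : u ≠ v) :
    ∃ x ∈ H.commonNeighbors u v, t = {u, v, x} := by
  have hsub : ({u, v} : Finset V) ⊆ t :=
    Finset.insert_subset hu (Finset.singleton_subset_iff.2 hv)
  obtain ⟨x, hx⟩ : ∃ x, t \ {u, v} = {x} := by
    rw [← Finset.card_eq_one, Finset.card_sdiff_of_subset hsub, ht.1, Finset.card_pair huv]
  have hxt : x ∈ t \ {u, v} := hx ▸ Finset.mem_singleton_self x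
  simp only [Finset.mem_sdiff, Finset.mem_insert, Finset.mem_singleton, not_or] at hxt
  obtain ⟨hxt, hxu, hxv⟩ := hxt
  refine ⟨x, H.mem_commonNeighbors.2
    ⟨ht.2 u hu x hxt (Ne.symm hxu), ht.2 v hv x hxt (Ne.symm hxv)⟩, ?_⟩
  rw [← Finset.sdiff_union_of_subset hsub, hx]
  ext y
  simp only [Finset.mem_union, Finset.mem_insert, Finset.mem_singleton]
  tauto

namespace SimpleGraph

variable {H : SimpleGraph V} [DecidableRel H.Adj] {u v w : V}

variable (H) in
lemma edgeSupport_le_card_commonNeighbors (huv : u ≠ v) :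
    edgeSupport H u v ≤ Fintype.card (H.commonNeighbors u v) := by
  rw [← Set.toFinset_card]
  refine Finset.card_le_card_of_surjOn (fun x => ({u, v, x} : Finset V)) fun t ht => ?_
  simp only [Finset.coe_filter, Finset.mem_univ, true_and, Set.mem_ofPred_eq] at ht
  obtain ⟨x, hx, rfl⟩ := ht.1.exists_eq_insert_insert ht.2.1 ht.2.2 huv
  exact ⟨x, by simpa using hx, rfl⟩

lemma card_commonNeighbors_add_three_le (huv : u ≠ v) (hwu : w ≠ u) (hwv : w ≠ v)
    (hw : w ∉ H.commonNeighbors u v) :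
    Fintype.card (H.commonNeighbors u v) + 3 ≤ Fintype.card V := by
  have hdisj : Disjoint ({u, v, w} : Finset V) (H.commonNeighbors u v).toFinset := by
    simp [notMem_commonNeighbors_left, notMem_commonNeighbors_right, hw]
  rw [← Set.toFinset_card, add_comm,
    ← Finset.card_eq_three.2 ⟨u, v, w, huv, hwu.symm, hwv.symm, rfl⟩,
    ← Finset.card_union_of_disjoint hdisj]
  exact Finset.card_le_univ _

lemma adj_of_card_sub_two_le_edgeSupport (huv : H.Adj u v)
    (hsupp : Fintype.card V - 2 ≤ edgeSupport H u v) (hwu : w ≠ u) (hwv : w ≠ v) :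
    H.Adj u w := by
  by_contra huw
  have hw : w ∉ H.commonNeighbors u v := fun h => huw (H.mem_commonNeighbors.1 h).1
  have := H.edgeSupport_le_card_commonNeighbors huv.ne
  have := card_commonNeighbors_add_three_le huv.ne hwu hwv hw
  omega

end SimpleGraph

theorem stmt2_general (H : SimpleGraph V) [DecidableRel H.Adj] (s : ℕ)
    (hcard : Fintype.card V = s)
    (hiso : ∀ v : V, ∃ u, H.Adj v u)
    (htruss : ∀ u v : V, H.Adj u v → s - 2 ≤ edgeSupport H u v) :
    H = ⊤ := by
  subst hcard
  ext x y
  refine ⟨SimpleGraph.Adj.ne, fun hxy => ?_⟩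
  obtain ⟨u, hxu⟩ := hiso x
  rcases eq_or_ne y u with rfl | hyu
  · exact hxu
  · exact SimpleGraph.adj_of_card_sub_two_le_edgeSupport hxu (htruss x u hxu) (Ne.symm hxy) hyu

/-- A simple graph on exactly `s` vertices with no isolated vertices which is an
`s`-truss is the complete graph on `s` vertices. -/
theorem stmt2 (H : SimpleGraph V) [DecidableRel H.Adj] (s : ℕ) (hs : 2 ≤ s)
    (hcard : Fintype.card V = s)
    (hiso : ∀ v : V, ∃ u, H.Adj v u)
    (htruss : ∀ u v : V, H.Adj u v → s - 2 ≤ edgeSupport H u v) :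
    H = ⊤ :=
  stmt2_general H s hcard hiso htruss
end

section
/- Reduction gadget correctness: let G = (V,E) be a simple graph and construct the bipartite graph H whose vertices are V ∪ E ∪ {q}, with each edge e = {u,v} ∈ E joined to u, v, and q. Then for the derived graph G_P on V ∪ {q}, where two type-1 vertices are adjacent iff they have a common neighbor in H among the edge-vertices: G_P restricted to V equals G, and q is adjacent in G_P to exactly the non-isolated vertices of V. Consequently, G contains a clique of size m among non-isolated vertices iff G_P contains a clique of size m+1 containing q. -/
variable {V : Type*} [DecidableEq V]

/-- Incidence in the gadget bipartite graph `H`: the type-1 vertex `x`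
(a vertex of `G`, or the extra vertex `q = none`) is adjacent in `H` to the
edge-vertex `e` iff `x` is an endpoint of `e`, and `q` is adjacent to every
edge-vertex. -/
def inc {V : Type*} (x : Option V) (e : Sym2 V) : Prop :=
  match x with
  | some u => u ∈ e
  | none => True

/-- Adjacency in the derived graph `G_P` on `V ∪ {q}`: two distinct type-1
vertices are adjacent iff some edge-vertex of `H` is adjacent to both. -/
def DAdj {V : Type*} (G : SimpleGraph V) (x y : Option V) : Prop :=
  x ≠ y ∧ ∃ e ∈ G.edgeSet, inc x e ∧ inc y e

namespace Finset

variable {α : Type*}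

theorem exists_card_succ_none_mem_iff (P : Finset (Option α) → Prop) (m : ℕ) :
    (∃ T : Finset (Option α), T.card = m + 1 ∧ none ∈ T ∧ P T) ↔
      ∃ S : Finset α, S.card = m ∧ P (insertNone S) := by
  classical
  constructor
  · rintro ⟨T, hcard, hnone, hP⟩
    have hT : insertNone (eraseNone T) = T := by
      rw [insertNone_eraseNone, insert_eq_of_mem hnone]
    refine ⟨eraseNone T, ?_, hT.symm ▸ hP⟩
    rw [← add_left_inj 1, ← card_insertNone, hT, hcard]
  · rintro ⟨S, rfl, hP⟩
    exact ⟨insertNone S, card_insertNone S, none_mem_insertNone, hP⟩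

theorem pairwise_insertNone_iff (r : Option α → Option α → Prop) [Std.Symm r] (s : Finset α) :
    (∀ x ∈ insertNone s, ∀ y ∈ insertNone s, x ≠ y → r x y) ↔
      (∀ a ∈ s, r none (some a)) ∧ ∀ a ∈ s, ∀ b ∈ s, a ≠ b → r (some a) (some b) := by
  simp only [forall_mem_insertNone, ne_eq, reduceCtorEq, not_false_eq_true, forall_const,
    not_true_eq_false, IsEmpty.forall_iff, true_and, Option.some.injEq]
  exact and_congr_right fun hnone =>
    forall₂_congr fun a ha => and_iff_right (symm_of r (hnone a ha))

end Finset

section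

omit [DecidableEq V]

variable (G : SimpleGraph V)

instance : Std.Symm (DAdj G) where
  symm _ _ := fun ⟨hne, e, he, hx, hy⟩ => ⟨hne.symm, e, he, hy, hx⟩

theorem dAdj_some_some_iff (u v : V) : DAdj G (some u) (some v) ↔ G.Adj u v := by
  constructor
  · rintro ⟨hne, e, he, hu, hv⟩
    rwa [(Sym2.mem_and_mem_iff (mt (congrArg some) hne)).mp ⟨hu, hv⟩] at he
  · intro h
    exact ⟨Option.some_injective _ |>.ne h.ne, s(u, v), h, Sym2.mem_mk_left u v,
      Sym2.mem_mk_right u v⟩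

theorem dAdj_none_some_iff (u : V) : DAdj G none (some u) ↔ ∃ w, G.Adj u w := by
  constructor
  · rintro ⟨-, e, he, -, hu⟩
    exact ⟨Sym2.Mem.other hu, by rwa [← G.mem_edgeSet, Sym2.other_spec hu]⟩
  · rintro ⟨w, hw⟩
    exact ⟨(Option.some_ne_none u).symm, s(u, w), hw, trivial, Sym2.mem_mk_left u w⟩

end

/-- Reduction gadget correctness: `G_P` restricted to `V` equals `G`; `q` is
adjacent in `G_P` to exactly the non-isolated vertices; and `G` has a clique of
size `m` among non-isolated vertices iff `G_P` has a clique of size `m+1`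
containing `q`. -/
theorem stmt17 (G : SimpleGraph V) :
    (∀ u v : V, DAdj G (some u) (some v) ↔ G.Adj u v) ∧
    (∀ u : V, DAdj G none (some u) ↔ ∃ w, G.Adj u w) ∧
    (∀ m : ℕ,
      (∃ S : Finset V, S.card = m ∧ (∀ x ∈ S, ∃ w, G.Adj x w) ∧
        ∀ x ∈ S, ∀ y ∈ S, x ≠ y → G.Adj x y) ↔
      (∃ T : Finset (Option V), T.card = m + 1 ∧ none ∈ T ∧
        ∀ x ∈ T, ∀ y ∈ T, x ≠ y → DAdj G x y)) := by
  refine ⟨dAdj_some_some_iff G, dAdj_none_some_iff G, fun m => ?_⟩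
  simp only [Finset.exists_card_succ_none_mem_iff, Finset.pairwise_insertNone_iff,
    dAdj_some_some_iff, dAdj_none_some_iff]
end
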